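/- Let V be real-valued and integrable on [0,x] for every x < ∞, and let z ∈ ℂ with Im z ≠ 0. Then the Dirichlet solution satisfies u(x,z) ≠ 0 for every x > 0. -/

import Mathlib

/-!
Multiplying `-u'' + V u = z u` by `conj u` and integrating by parts over `[0, x]` gives the
Lagrange identity `conj (u x) * u' x = ∫₀ˣ |u'|² + ∫₀ˣ (V - z) |u|²`. Since `V` is real, its
imaginary part is `-Im z * ∫₀ˣ |u|²`. The integral is positive because `u'(0) = 1` keeps `u`
from vanishing identically near `0`, so `u x = 0` would force `Im z = 0`.
-/

open MeasureTheory

/-- `u` is the Dirichlet solution for potential `V` at energy `z`: `u ∈ W^{2,1}_loc([0,∞))`,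
`-u'' + V u = z u` a.e. (encoded in integrated form), `u(0) = 0`, `u'(0) = 1`. -/
def IsDirichlet (V : ℝ → ℝ) (z : ℂ) (u u' : ℝ → ℂ) : Prop :=
  u 0 = 0 ∧ u' 0 = 1 ∧
  (∀ x, 0 ≤ x → HasDerivWithinAt u (u' x) (Set.Ici 0) x) ∧
  (∀ x, 0 ≤ x → u' x = 1 + ∫ t in (0:ℝ)..x, ((V t : ℂ) - z) * u t)

open Set Topology ComplexConjugate

section IntegrationByParts

variable {𝕜 : Type*} [RCLike 𝕜] {a b : ℝ} {h f : ℝ → 𝕜}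

/- The primitive of `f` is only absolutely continuous, so integration by parts goes through
Fubini on the triangle `a ≤ t ≤ s ≤ b` rather than through the product rule. -/
theorem integral_primitive_mul_eq_integral_mul_tail (hab : a ≤ b)
    (hh : IntervalIntegrable h volume a b) (hf : IntervalIntegrable f volume a b) :
    ∫ s in a..b, (∫ t in a..s, h t) * f s = ∫ t in a..b, h t * ∫ s in t..b, f s := by
  set K : ℝ → ℝ → 𝕜 := fun s t => {t | t ≤ s}.indicator (fun t => h t * f s) t
  have hK : IntegrableOn (Function.uncurry K) (uIoc a b ×ˢ uIoc a b) := by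
    rw [uIoc_of_le hab, IntegrableOn, Measure.volume_eq_prod, ← Measure.prod_restrict]
    have hfh := (hf.def'.mul_prod hh.def' : Integrable (fun p : ℝ × ℝ => f p.1 * h p.2) _)
    rw [uIoc_of_le hab] at hfh
    refine (hfh.indicator (measurableSet_le measurable_snd measurable_fst)).congr ?_
    refine Filter.Eventually.of_forall fun p => ?_
    simp [K, Function.uncurry, Set.indicator_apply, mul_comm]
  calc ∫ s in a..b, (∫ t in a..s, h t) * f s = ∫ s in a..b, ∫ t in a..b, K s t := by
        refine intervalIntegral.integral_congr fun s hs => ?_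
        rw [uIcc_of_le hab] at hs
        simp only [K, intervalIntegral.integral_indicator hs, intervalIntegral.integral_mul_const]
    _ = ∫ t in a..b, ∫ s in a..b, K s t := intervalIntegral_intervalIntegral_swap hK
    _ = ∫ t in a..b, h t * ∫ s in t..b, f s := by
        refine intervalIntegral.integral_congr_ae (Filter.Eventually.of_forall fun t ht => ?_)
        rw [uIoc_of_le hab] at ht
        have hK' : ∀ s, K s t = (Ici t).indicator (fun s => h t * f s) s := fun s => by
          simp only [K, Set.indicator_apply, mem_ofPred_eq, mem_Ici]
        have hIcc : Ioc a b ∩ Ici t = Icc t b := by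
          ext s; simp only [mem_inter_iff, mem_Ioc, mem_Ici, mem_Icc]; grind
        simp only [hK', intervalIntegral.integral_of_le hab, intervalIntegral.integral_of_le ht.2,
          setIntegral_indicator measurableSet_Ici, hIcc, integral_Icc_eq_integral_Ioc,
          integral_const_mul]

theorem integral_primitive_mul_add_mul_primitive (hab : a ≤ b)
    (hh : IntervalIntegrable h volume a b) (hf : IntervalIntegrable f volume a b) :
    (∫ s in a..b, (∫ t in a..s, h t) * f s) + ∫ s in a..b, h s * ∫ t in a..s, f t
      = (∫ t in a..b, h t) * ∫ t in a..b, f t := by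
  have hF : ContinuousOn (fun s => ∫ t in a..s, f t) (uIcc a b) :=
    intervalIntegral.continuousOn_primitive_interval' hf left_mem_uIcc
  have htail : EqOn (fun t => h t * ∫ s in t..b, f s)
      (fun t => h t * (∫ s in a..b, f s) - h t * ∫ s in a..t, f s) (uIcc a b) := fun t ht => by
    dsimp only
    rw [← mul_sub, intervalIntegral.integral_interval_sub_left hf (hf.mono_set ?_)]
    exact uIcc_subset_uIcc_left ht
  rw [integral_primitive_mul_eq_integral_mul_tail hab hh hf, intervalIntegral.integral_congr htail,
    intervalIntegral.integral_sub (hh.mul_const _) (hh.mul_continuousOn hF),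
    intervalIntegral.integral_mul_const, sub_add_cancel]

end IntegrationByParts

theorem intervalIntegrable_ofReal_sub_mul {V : ℝ → ℝ} {b : ℝ} (hb : 0 ≤ b)
    (hV : IntegrableOn V (Icc 0 b)) (z : ℂ) {w : ℝ → ℂ} (hw : ContinuousOn w (Icc 0 b)) :
    IntervalIntegrable (fun t => ((V t : ℂ) - z) * w t) volume 0 b := by
  have hVz : IntegrableOn (fun t => (V t : ℂ) - z) (uIcc 0 b) := by
    rw [uIcc_of_le hb]
    exact hV.ofReal.sub (integrableOn_const measure_Icc_lt_top.ne)
  exact hVz.intervalIntegrable.mul_continuousOn (by rwa [uIcc_of_le hb])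

namespace IsDirichlet

variable {V : ℝ → ℝ} {z : ℂ} {u u' : ℝ → ℂ}

theorem continuousOn (hu : IsDirichlet V z u u') : ContinuousOn u (Ici 0) :=
  fun x hx => (hu.2.2.1 x hx).continuousWithinAt

theorem continuousOn_deriv (hu : IsDirichlet V z u u') {b : ℝ} (hb : 0 ≤ b)
    (hV : IntegrableOn V (Icc 0 b)) : ContinuousOn u' (Icc 0 b) := by
  have hprim := intervalIntegral.continuousOn_primitive_interval' (intervalIntegrable_ofReal_sub_mul
    hb hV z (hu.continuousOn.mono Icc_subset_Ici_self)) left_mem_uIcc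
  rw [uIcc_of_le hb] at hprim
  exact (continuousOn_const.add hprim).congr fun s hs => hu.2.2.2 s hs.1

theorem eq_integral_deriv (hu : IsDirichlet V z u u') {x : ℝ} (hx : 0 ≤ x)
    (hV : IntegrableOn V (Icc 0 x)) : u x = ∫ t in 0..x, u' t := by
  rw [intervalIntegral.integral_eq_sub_of_hasDeriv_right_of_le hx
    (hu.continuousOn.mono Icc_subset_Ici_self)
    (fun t ht => (hu.2.2.1 t ht.1.le).mono (Ioi_subset_Ici ht.1.le))
    ((hu.continuousOn_deriv hx hV).intervalIntegrable_of_Icc hx), hu.1, sub_zero]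

theorem conj_mul_deriv_eq_integral (hu : IsDirichlet V z u u') {x : ℝ}
    (hx : 0 ≤ x) (hV : IntegrableOn V (Icc 0 x)) :
    conj (u x) * u' x = (∫ s in 0..x, (Complex.normSq (u' s) : ℂ))
      + ∫ s in 0..x, ((V s : ℂ) - z) * Complex.normSq (u s) := by
  have hf := intervalIntegrable_ofReal_sub_mul hx hV z (hu.continuousOn.mono Icc_subset_Ici_self)
  have hu'c := hu.continuousOn_deriv hx hV
  have hcu' : IntervalIntegrable (fun s => conj (u' s)) volume 0 x :=
    ContinuousOn.intervalIntegrable_of_Icc hx (by fun_prop)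
  have hconj : ∀ s ∈ uIcc 0 x, ∫ t in 0..s, conj (u' t) = conj (u s) := fun s hs => by
    rw [uIcc_of_le hx] at hs
    rw [intervalIntegral.intervalIntegral_conj,
      ← hu.eq_integral_deriv hs.1 (hV.mono_set (Icc_subset_Icc_right hs.2))]
  have hpotential : ∫ s in 0..x, (∫ t in 0..s, conj (u' t)) * (((V s : ℂ) - z) * u s)
      = ∫ s in 0..x, ((V s : ℂ) - z) * Complex.normSq (u s) :=
    intervalIntegral.integral_congr fun s hs => by
      rw [hconj s hs, Complex.normSq_eq_conj_mul_self]; ring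
  have hkinetic : ∫ s in 0..x, conj (u' s) * ∫ t in 0..s, ((V t : ℂ) - z) * u t
      = (∫ s in 0..x, (Complex.normSq (u' s) : ℂ)) - ∫ s in 0..x, conj (u' s) := by
    rw [← intervalIntegral.integral_sub (ContinuousOn.intervalIntegrable_of_Icc hx (by fun_prop))
      hcu']
    refine intervalIntegral.integral_congr fun s hs => ?_
    rw [uIcc_of_le hx] at hs
    rw [Complex.normSq_eq_conj_mul_self, hu.2.2.2 s hs.1]; ring
  have hibp := integral_primitive_mul_add_mul_primitive hx hcu' hf
  rw [hpotential, hkinetic, hconj x right_mem_uIcc] at hibp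
  rw [hu.2.2.2 x hx]
  linear_combination -hibp

theorem im_conj_mul_deriv (hu : IsDirichlet V z u u') {x : ℝ}
    (hx : 0 ≤ x) (hV : IntegrableOn V (Icc 0 x)) :
    (conj (u x) * u' x).im = -z.im * ∫ s in 0..x, Complex.normSq (u s) := by
  have huc : ContinuousOn u (Icc 0 x) := hu.continuousOn.mono Icc_subset_Ici_self
  have hint := intervalIntegrable_ofReal_sub_mul hx hV z
    (w := fun s => (Complex.normSq (u s) : ℂ)) (by fun_prop)
  rw [hu.conj_mul_deriv_eq_integral hx hV, Complex.add_im, intervalIntegral.integral_ofReal,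
    Complex.ofReal_im, zero_add, ← RCLike.im_to_complex,
    ← intervalIntegral.intervalIntegral_im hint, ← intervalIntegral.integral_const_mul]
  congr 1 with s
  simp

theorem exists_ne_zero (hu : IsDirichlet V z u u') {x : ℝ} (hx : 0 < x) :
    ∃ c ∈ Icc 0 x, u c ≠ 0 := by
  obtain ⟨-, hu'0, hderiv, -⟩ := hu
  by_contra! h
  have hzero : u =ᶠ[𝓝[≥] 0] fun _ => 0 := by
    filter_upwards [Icc_mem_nhdsGE hx] with c hc using h c hc
  have := (uniqueDiffOn_Ici 0 0 self_mem_Ici).eq_deriv _ (hderiv 0 le_rfl)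
    ((hasDerivWithinAt_const 0 _ 0).congr_of_eventuallyEq hzero (h 0 ⟨le_rfl, hx.le⟩))
  exact one_ne_zero (hu'0 ▸ this)

end IsDirichlet

/-- for `Im z ≠ 0` the Dirichlet solution has no zeros in `(0,∞)`. -/
theorem dirichlet_solution_nonvanishing (V : ℝ → ℝ)
    (hVloc : ∀ x : ℝ, MeasureTheory.IntegrableOn V (Set.Icc 0 x))
    (z : ℂ) (hz : z.im ≠ 0)
    (u u' : ℝ → ℂ) (hu : IsDirichlet V z u u') :
    ∀ x : ℝ, 0 < x → u x ≠ 0 := by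
  intro x hx hux
  have hpos : 0 < ∫ s in 0..x, Complex.normSq (u s) := by
    obtain ⟨c, hc, huc⟩ := hu.exists_ne_zero hx
    exact intervalIntegral.integral_pos hx
      (Complex.continuous_normSq.comp_continuousOn (hu.continuousOn.mono Icc_subset_Ici_self))
      (fun s _ => Complex.normSq_nonneg _) ⟨c, hc, Complex.normSq_pos.mpr huc⟩
  have him := hu.im_conj_mul_deriv hx.le (hVloc x)
  rw [hux, map_zero, zero_mul, Complex.zero_im] at him
  exact mul_ne_zero (neg_ne_zero.mpr hz) hpos.ne' him.symm
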